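/- arXiv:2604.05617 — 4 statements merged into one kernel-verified Lean document; each statement's English description precedes it below -/
import Mathlib

section
/- For the constrained scalar–fluid system with γ = 0, the fluid point M = (0,0) has Jacobian diag(0, -3), and the local centre manifold through M is tangent to the X-axis with graph Y = (a/3)X² + O(X⁴); the reduced dynamics on the centre manifold is X' = -(a²/3)X³ + O(X⁵). -/
open Asymptotics Filter Topology

lemma isBigO_mul_pow_nhds_zero {𝕜 : Type*} [NormedField 𝕜] {g : 𝕜 → 𝕜}
    (hg : ContinuousAt g 0) (n : ℕ) :
    (fun x => g x * x ^ n) =O[𝓝 0] (· ^ n) := by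
  simpa using (hg.tendsto.isBigO_one 𝕜).mul (isBigO_refl (· ^ n) (𝓝 (0 : 𝕜)))

lemma hasFDerivAt_fluidField_origin (a : ℝ) :
    HasFDerivAt (fun p : ℝ × ℝ => (p.1*(3*p.2^2 - a*p.2), -3*p.2 + a*p.1^2 + 3*p.2^3))
      (ContinuousLinearMap.prod ((0:ℝ) • ContinuousLinearMap.fst ℝ ℝ ℝ)
        ((-3:ℝ) • ContinuousLinearMap.snd ℝ ℝ ℝ)) ((0:ℝ), (0:ℝ)) := by
  have hX := hasFDerivAt_fst (𝕜 := ℝ) (p := ((0:ℝ), (0:ℝ)))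
  have hY := hasFDerivAt_snd (𝕜 := ℝ) (p := ((0:ℝ), (0:ℝ)))
  have hXdot := hX.mul (((hY.pow 2).const_mul 3).sub (hY.const_mul a))
  have hYdot := ((hY.const_mul (-3)).add ((hX.pow 2).const_mul a)).add ((hY.pow 3).const_mul 3)
  refine (hXdot.prodMk hYdot).congr_fderiv ?_
  ext <;> simp

/-- For γ = 0: at M = (0,0) the Jacobian is diag(0,-3); the graph Y = (a/3)X² satisfies
the centre-manifold invariance equation up to O(X⁴); and the reduced dynamics on it is
X' = -(a²/3)X³ + O(X⁵). -/
theorem stmt6 (a : ℝ) :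
    HasFDerivAt (fun p : ℝ × ℝ => (p.1*(3*p.2^2 - a*p.2), -3*p.2 + a*p.1^2 + 3*p.2^3))
      (ContinuousLinearMap.prod ((0:ℝ) • ContinuousLinearMap.fst ℝ ℝ ℝ)
        ((-3:ℝ) • ContinuousLinearMap.snd ℝ ℝ ℝ)) ((0:ℝ), (0:ℝ)) ∧
    (fun X : ℝ => ((2*a/3)*X) * (X*(3*((a/3)*X^2)^2 - a*((a/3)*X^2))) -
        (-3*((a/3)*X^2) + a*X^2 + 3*((a/3)*X^2)^3)) =O[nhds 0] (fun X : ℝ => X^4) ∧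
    (fun X : ℝ => X*(3*((a/3)*X^2)^2 - a*((a/3)*X^2)) - (-(a^2/3)*X^3))
      =O[nhds 0] (fun X : ℝ => X^5) := by
  refine ⟨hasFDerivAt_fluidField_origin a, ?_, ?_⟩
  · -- h'(X) X' - Y' along Y = h(X) equals (a³/9) X⁶ - (2a³/9) X⁴
    exact (isBigO_mul_pow_nhds_zero (g := fun X : ℝ => a^3/9*X^2 - 2*a^3/9) (by fun_prop)
      4).congr_left fun X => by ring
  · -- on Y = h(X) the X-equation is exactly -(a²/3) X³ + (a²/3) X⁵
    exact (isBigO_mul_pow_nhds_zero (g := fun _ : ℝ => a^2/3) continuousAt_const 5).congr_left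
      fun X => by ring
end

section
/- For the scalar–fluid–curvature system, the Jacobian at the scalar point S = (√(1-a²/9), a/3, 0) has eigenvalues (a² - 9)/3, 2(a² - 3)/3, and (2a² - 9γ)/3. Hence S is non-hyperbolic exactly on the union of the loci a² = 9, a² = 3, and 2a² = 9γ. -/
open Matrix

/-- The SFC Jacobian at the scalar point S has eigenvalues (a²-9)/3, 2(a²-3)/3,
(2a²-9γ)/3, so S is non-hyperbolic exactly on a² = 9, a² = 3, or 2a² = 9γ. -/
theorem stmt12 (a γ : ℝ) (ha : a^2 ≤ 9) :
    let J : Matrix (Fin 3) (Fin 3) ℝ :=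
      !![(γ/3)*(a^2-9), (a/3)*(1-γ)*Real.sqrt (9-a^2), (1 - 3*γ/2)*Real.sqrt (1 - a^2/9);
         (a/3)*(2-γ)*Real.sqrt (9-a^2), a^2*(1-γ/3) - 3, 0;
         0, 0, (2/3)*(a^2-3)]
    (∀ t : ℝ, (t • (1 : Matrix (Fin 3) (Fin 3) ℝ) - J).det =
      (t - (a^2-9)/3) * (t - 2*(a^2-3)/3) * (t - (2*a^2-9*γ)/3)) ∧
    (((a^2-9)/3 = 0 ∨ 2*(a^2-3)/3 = 0 ∨ (2*a^2-9*γ)/3 = 0) ↔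
      (a^2 = 9 ∨ a^2 = 3 ∨ 2*a^2 = 9*γ)) := by
  intro J
  have hs : Real.sqrt (9 - a^2) * Real.sqrt (9 - a^2) = 9 - a^2 :=
    Real.mul_self_sqrt (by linarith)
  constructor
  · intro t
    simp [J, Matrix.one_fin_three, det_fin_three, Matrix.vecHead, Matrix.vecTail]
    ring_nf
    rw [Real.sq_sqrt (by linarith : (0:ℝ) ≤ 9 - a^2)]
    ring
  · constructor
    · rintro (h | h | h)
      · left; linarith
      · right; left; linarith
      · right; right; linarith
    · rintro (h | h | h)
      · left; linarith
      · right; left; linarith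
      · right; right; linarith
end

section
/- For the scalar–fluid–curvature system restricted to X = Y = 0, one has X' = Y' = 0 and Ω_k' = Ω_k(3γ - 2)(1 - Ω_k). Consequently, when γ = 2/3 the whole segment L_MC = {(0,0,W) : 0 ≤ W ≤ 1} consists of equilibria, while for γ ≠ 2/3 the only equilibria on this segment are Ω_k = 0 and Ω_k = 1. -/
/-- On X = Y = 0 the SFC system has X' = Y' = 0 and Ω_k' = Ω_k(3γ-2)(1-Ω_k); for γ = 2/3
the whole segment 0 ≤ Ω_k ≤ 1 consists of equilibria, otherwise only Ω_k = 0 and Ω_k = 1. -/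
theorem stmt13 (a γ : ℝ) :
    (∀ W : ℝ,
      (0:ℝ) * (3*0^2 + (3*γ/2)*(1-0^2-0^2-W) + W - a*0) = 0 ∧
      -3*(0:ℝ) + a*0^2 + 3*0^3 + (3*γ/2)*0*(1-0^2-0^2-W) + 0*W = 0 ∧
      2*W*(3*0^2 + (3*γ/2)*(1-0^2-0^2-W) + W - 1) = W*(3*γ-2)*(1-W)) ∧
    (γ = 2/3 → ∀ W : ℝ, 0 ≤ W → W ≤ 1 → W*(3*γ-2)*(1-W) = 0) ∧
    (γ ≠ 2/3 → ∀ W : ℝ, (W*(3*γ-2)*(1-W) = 0 ↔ W = 0 ∨ W = 1)) := by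
  refine ⟨fun W => ⟨by ring, by ring, by ring⟩, fun h W _ _ => by rw [h]; ring, fun h W => ?_⟩
  constructor
  · intro hW
    rcases mul_eq_zero.mp hW with h1 | h2
    · rcases mul_eq_zero.mp h1 with h3 | h4
      · exact Or.inl h3
      · exact absurd (by linarith) h
    · exact Or.inr (by linarith)
  · rintro (rfl | rfl) <;> ring
end

section
/- For the SFC scaling equilibrium F = (X_F, Y_F, 0) with Y_F = 3γ/(2a) and X_F² = 9γ(2-γ)/(4a²), the 2×2 Jacobian block in the (X,Y) directions has trace (3/2)(γ - 2) and determinant -9γ(γ-2)(2a² - 9γ)/(4a²); hence for 0 < γ < 2 this block is singular if and only if 2a² = 9γ. -/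
open Matrix

/-- The (X,Y) Jacobian block at the SFC scaling point F has trace (3/2)(γ-2) and
determinant -9γ(γ-2)(2a²-9γ)/(4a²); for 0 < γ < 2 it is singular iff 2a² = 9γ. -/
theorem stmt15 (a γ : ℝ) (ha : a ≠ 0) (hγ0 : 0 ≤ γ) (hγ2 : γ ≤ 2) :
    let XF : ℝ := Real.sqrt (9*γ*(2-γ)/(4*a^2))
    let YF : ℝ := 3*γ/(2*a)
    let J : Matrix (Fin 2) (Fin 2) ℝ :=
      !![-3*γ*XF^2, XF*(3*(2-γ)*YF - a);
         XF*(2*a - 3*γ*YF), 3*γ*XF^2 + (3/2)*(γ-2)]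
    J.trace = (3/2)*(γ-2) ∧
    J.det = -(9*γ*(γ-2)*(2*a^2-9*γ))/(4*a^2) ∧
    (0 < γ → γ < 2 → (J.det = 0 ↔ 2*a^2 = 9*γ)) := by
  intro XF YF J
  have ha2 : (4:ℝ)*a^2 ≠ 0 := by positivity
  have hXF2 : XF^2 = 9*γ*(2-γ)/(4*a^2) := by
    apply Real.sq_sqrt
    have : 0 ≤ 2 - γ := by linarith
    positivity
  have htr : J.trace = (3/2)*(γ-2) := by
    simp [J, Matrix.trace_fin_two]
  have hdet : J.det = -(9*γ*(γ-2)*(2*a^2-9*γ))/(4*a^2) := by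
    have : J.det = (-3*γ*XF^2)*(3*γ*XF^2 + (3/2)*(γ-2))
        - (XF*(3*(2-γ)*YF - a))*(XF*(2*a - 3*γ*YF)) := by
      simp [J, Matrix.det_fin_two_of]
    rw [this]
    have : (-3*γ*XF^2)*(3*γ*XF^2 + (3/2)*(γ-2))
        - (XF*(3*(2-γ)*YF - a))*(XF*(2*a - 3*γ*YF))
        = XF^2 * ((-3*γ)*(3*γ*XF^2 + (3/2)*(γ-2)) - (3*(2-γ)*YF - a)*(2*a - 3*γ*YF)) := by
      ring
    rw [this, hXF2]
    show (9*γ*(2-γ)/(4*a^2)) * ((-3*γ)*(3*γ*(9*γ*(2-γ)/(4*a^2)) + (3/2)*(γ-2))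
        - (3*(2-γ)*(3*γ/(2*a)) - a)*(2*a - 3*γ*(3*γ/(2*a)))) = _
    field_simp
    ring
  refine ⟨htr, hdet, fun h0 h2 => ?_⟩
  rw [hdet]
  constructor
  · intro h
    have h' : 9*γ*(γ-2)*(2*a^2-9*γ) = 0 := by
      field_simp at h
      linarith [h]
    have hγ : γ ≠ 0 := ne_of_gt h0
    have hγ2' : γ - 2 ≠ 0 := by linarith
    have := mul_eq_zero.mp h'
    rcases this with h'' | h''
    · rcases mul_eq_zero.mp h'' with h3 | h3
      · exact absurd h3 (by positivity)
      · exact absurd h3 hγ2'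
    · linarith
  · intro h
    have : 2*a^2 - 9*γ = 0 := by linarith
    rw [this]; ring_nf
end
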